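/- Let d ≥ 2 be an integer, let v₁, v₂ ∈ ℝ^d with r := |v₁ − v₂| > 0, define J : ℝ^d → ℝ^d by J(ω) = r^{-1}((v₁ − v₂) + 2⟨ω, v₂ − v₁⟩ω), and let S⁺ = {ω ∈ 𝕊₁^{d-1} : ⟨ω, v₂ − v₁⟩ > 0}. Then there is a constant C > 0, depending only on d, such that for every measurable function g : ℝ^d → [0, ∞], ∫_{S⁺} g(J(ω)) ⟨ω, v₂ − v₁⟩^d dσ(ω) ≤ C r^d ∫_{𝕊₁^{d-1}} g(ν) dσ(ν), where σ denotes the surface measure ((d−1)-dimensional Hausdorff measure) on 𝕊₁^{d-1}. -/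

import Mathlib

open MeasureTheory

/-- The binary transition map `J(ω) = r⁻¹ ((v₁ − v₂) + 2⟨ω, v₂ − v₁⟩ ω)`, where `r = |v₁ − v₂|`. -/
noncomputable def transJ {d : ℕ} (v₁ v₂ : EuclideanSpace ℝ (Fin d)) :
    EuclideanSpace ℝ (Fin d) → EuclideanSpace ℝ (Fin d) :=
  fun ω => ‖v₁ - v₂‖⁻¹ • ((v₁ - v₂) + (2 * (inner ℝ ω (v₂ - v₁) : ℝ)) • ω)

/-!
Write `a = v₂ - v₁`, `r = ‖a‖` and `t ω = ⟪ω, a⟫`. Since `J ω + r⁻¹ a = (2 t ω / r) • ω`, on the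
part of the upper hemisphere where `ρ ≤ 2 t ω / r` the map `J` is inverted by
`ν ↦ normalize (ν + r⁻¹ a)`, and normalization is `2/ρ`-Lipschitz on `{ρ ≤ ‖·‖}`. So `J` pushes the
`(d-1)`-dimensional Hausdorff measure of that part forward to at most `(2/ρ)^(d-1)` times the
surface measure. On the dyadic shell `t ω ∈ (b/2, b]` (take `ρ = b / r`) the weight `t^d ≤ b^d`
absorbs this factor, leaving `(2r)^(d-1) b`; summing over `b = 2⁻ᵏ r` gives `(2r)^d`.
-/

open Set Function NormedSpace
open scoped ENNReal

theorem iUnion_Ioc_inv_two_pow_mul {r : ℝ} (hr : 0 < r) :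
    ⋃ k : ℕ, Ioc (2⁻¹ ^ k * r / 2) (2⁻¹ ^ k * r) = Ioc 0 r := by
  refine Subset.antisymm (iUnion_subset fun k => Ioc_subset_Ioc (by positivity) ?_) ?_
  · exact mul_le_of_le_one_left hr.le (pow_le_one₀ (by norm_num) (by norm_num))
  rintro t ⟨ht, htr⟩
  have hex : ∃ k : ℕ, 2⁻¹ ^ k * r / 2 < t := by
    obtain ⟨k, hk⟩ := exists_pow_lt_of_lt_one (div_pos ht hr) (by norm_num : (2 : ℝ)⁻¹ < 1)
    rw [lt_div_iff₀ hr] at hk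
    exact ⟨k, by linarith [pow_pos (by norm_num : (0 : ℝ) < 2⁻¹) k]⟩
  refine mem_iUnion.mpr ⟨Nat.find hex, Nat.find_spec hex, ?_⟩
  rcases hk : Nat.find hex with _ | j
  · simpa using htr
  · have hmin := Nat.find_min hex (show j < Nat.find hex by omega)
    rw [not_lt] at hmin
    rw [pow_succ]
    linarith

theorem pairwise_disjoint_Ioc_inv_two_pow_mul {r : ℝ} (hr : 0 ≤ r) :
    Pairwise (Disjoint on fun k : ℕ => Ioc (2⁻¹ ^ k * r / 2) (2⁻¹ ^ k * r)) := by
  have hanti : Antitone fun k : ℕ => (2⁻¹ : ℝ) ^ k * r := fun i j hij =>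
    mul_le_mul_of_nonneg_right (pow_le_pow_of_le_one (by norm_num) (by norm_num) hij) hr
  convert hanti.pairwise_disjoint_on_Ioc_succ using 4 with k
  rw [Order.succ_eq_add_one, pow_succ]
  ring

section InnerProductSpace

variable {E : Type*} [NormedAddCommGroup E] [InnerProductSpace ℝ E]

def sphereShell (a : E) (k : ℕ) : Set E :=
  {ω | ω ∈ Metric.sphere 0 1 ∧ inner ℝ ω a ∈ Ioc (2⁻¹ ^ k * ‖a‖ / 2) (2⁻¹ ^ k * ‖a‖)}

theorem iUnion_sphereShell {a : E} (ha : a ≠ 0) :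
    ⋃ k, sphereShell a k = {ω | ω ∈ Metric.sphere 0 1 ∧ 0 < inner ℝ ω a} := by
  ext ω
  simp only [sphereShell, mem_iUnion, mem_ofPred_eq, exists_and_left]
  refine and_congr_right fun hω => ?_
  have hle : inner ℝ ω a ≤ ‖a‖ := (real_inner_le_norm _ _).trans_eq <| by
    rw [mem_sphere_zero_iff_norm.mp hω, one_mul]
  rw [← mem_iUnion (s := fun k : ℕ => Ioc (2⁻¹ ^ k * ‖a‖ / 2) (2⁻¹ ^ k * ‖a‖)),
    iUnion_Ioc_inv_two_pow_mul (norm_pos_iff.mpr ha), mem_Ioc]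
  exact ⟨And.left, fun hpos => ⟨hpos, hle⟩⟩

theorem pairwise_disjoint_sphereShell (a : E) : Pairwise (Disjoint on sphereShell a) :=
  fun _ _ hij => ((pairwise_disjoint_Ioc_inv_two_pow_mul (norm_nonneg a) hij).preimage
    (fun ω => inner ℝ ω a)).mono (fun _ hω => hω.2) (fun _ hω => hω.2)

theorem measurableSet_sphereShell [MeasurableSpace E] [OpensMeasurableSpace E] (a : E) (k : ℕ) :
    MeasurableSet (sphereShell a k) :=
  Metric.isClosed_sphere.measurableSet.inter (measurableSet_Ioc.preimage (by fun_prop))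

end InnerProductSpace

namespace NormedSpace

variable {V : Type*} [NormedAddCommGroup V] [NormedSpace ℝ V]

theorem norm_normalize_le_one (y : V) : ‖normalize y‖ ≤ 1 := by
  rw [normalize, norm_smul, norm_inv, norm_norm]
  exact inv_mul_le_one_of_le₀ le_rfl (norm_nonneg y)

theorem norm_normalize_sub_normalize_le {x : V} (hx : x ≠ 0) (y : V) :
    ‖normalize x - normalize y‖ ≤ 2 * ‖x - y‖ / ‖x‖ := by
  have hsplit : normalize x - normalize y =
      ‖x‖⁻¹ • ((x - y) + (‖y‖ - ‖x‖) • normalize y) := by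
    rw [sub_smul, norm_smul_normalize, smul_add, smul_sub, smul_sub, smul_smul,
      inv_mul_cancel₀ (norm_ne_zero_iff.mpr hx), one_smul, normalize]
    abel
  have hdiff : ‖(‖y‖ - ‖x‖) • normalize y‖ ≤ ‖x - y‖ := by
    rw [norm_smul, Real.norm_eq_abs, abs_sub_comm]
    calc |‖x‖ - ‖y‖| * ‖normalize y‖ ≤ |‖x‖ - ‖y‖| * 1 := by
          gcongr; exact norm_normalize_le_one y
      _ ≤ ‖x - y‖ := by rw [mul_one]; exact abs_norm_sub_norm_le x y
  rw [hsplit, norm_smul, norm_inv, norm_norm, inv_mul_eq_div]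
  gcongr
  linarith [norm_add_le (x - y) ((‖y‖ - ‖x‖) • normalize y)]

theorem lipschitzOnWith_normalize {ρ : ℝ} (hρ : 0 < ρ) :
    LipschitzOnWith (2 / ρ).toNNReal (normalize : V → V) {y | ρ ≤ ‖y‖} := by
  refine LipschitzOnWith.of_dist_le_mul fun x (hx : ρ ≤ ‖x‖) y _ => ?_
  have hx0 : x ≠ 0 := norm_pos_iff.mp (hρ.trans_le hx)
  rw [dist_eq_norm, dist_eq_norm, Real.coe_toNNReal _ (by positivity)]
  calc _ ≤ 2 * ‖x - y‖ / ‖x‖ := norm_normalize_sub_normalize_le hx0 y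
    _ ≤ 2 * ‖x - y‖ / ρ := by gcongr
    _ = 2 / ρ * ‖x - y‖ := by ring

theorem lipschitzOnWith_normalize_add_const {ρ : ℝ} (hρ : 0 < ρ) (n : V) :
    LipschitzOnWith (2 / ρ).toNNReal (fun ν => normalize (ν + n)) {ν | ρ ≤ ‖ν + n‖} :=
  LipschitzOnWith.of_dist_le_mul fun x hx y hy => by
    simpa only [dist_add_right] using (lipschitzOnWith_normalize hρ).dist_le_mul _ hx _ hy

end NormedSpace

section transJ

variable {d : ℕ} {v₁ v₂ : EuclideanSpace ℝ (Fin d)}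

theorem continuous_transJ : Continuous (transJ v₁ v₂) := by
  unfold transJ
  fun_prop

theorem transJ_add_smul (ω : EuclideanSpace ℝ (Fin d)) :
    transJ v₁ v₂ ω + ‖v₁ - v₂‖⁻¹ • (v₂ - v₁) =
      (2 * ‖v₁ - v₂‖⁻¹ * inner ℝ ω (v₂ - v₁)) • ω := by
  unfold transJ
  module

theorem norm_transJ (h : v₁ ≠ v₂) {ω : EuclideanSpace ℝ (Fin d)} (hω : ‖ω‖ = 1) :
    ‖transJ v₁ v₂ ω‖ = 1 := by
  -- `(v₁ - v₂) + 2⟪ω, v₂ - v₁⟫ ω` is the reflection of `v₁ - v₂` in the hyperplane `ω⊥`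
  have hreflect : ‖(v₁ - v₂) + (2 * inner ℝ ω (v₂ - v₁)) • ω‖ = ‖v₁ - v₂‖ := by
    rw [← sq_eq_sq₀ (norm_nonneg _) (norm_nonneg _), norm_add_sq_real, real_inner_smul_right,
      norm_smul, hω, mul_one, Real.norm_eq_abs, sq_abs, ← neg_sub v₂ v₁, inner_neg_left,
      real_inner_comm]
    ring
  rw [transJ, norm_smul, hreflect, norm_inv, norm_norm,
    inv_mul_cancel₀ (norm_ne_zero_iff.mpr (sub_ne_zero.mpr h))]

theorem normalize_transJ_add_smul (h : v₁ ≠ v₂) {ω : EuclideanSpace ℝ (Fin d)} (hω : ‖ω‖ = 1)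
    (hpos : 0 < inner ℝ ω (v₂ - v₁)) :
    normalize (transJ v₁ v₂ ω + ‖v₁ - v₂‖⁻¹ • (v₂ - v₁)) = ω := by
  have hr : 0 < ‖v₁ - v₂‖ := norm_pos_iff.mpr (sub_ne_zero.mpr h)
  rw [transJ_add_smul, normalize_smul_of_pos (by positivity),
    normalize_eq_self_of_norm_eq_one hω]

theorem hausdorffMeasure_preimage_transJ_inter_le (h : v₁ ≠ v₂) {s : ℝ} (hs : 0 ≤ s)
    {ρ : ℝ} (hρ : 0 < ρ) (A : Set (EuclideanSpace ℝ (Fin d))) :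
    μH[s] (transJ v₁ v₂ ⁻¹' A ∩ {ω | ω ∈ Metric.sphere 0 1 ∧
        ρ ≤ 2 * ‖v₁ - v₂‖⁻¹ * inner ℝ ω (v₂ - v₁)}) ≤
      ENNReal.ofReal (2 / ρ) ^ s * μH[s] (A ∩ Metric.sphere 0 1) := by
  set n := ‖v₁ - v₂‖⁻¹ • (v₂ - v₁)
  set T := {ν : EuclideanSpace ℝ (Fin d) | ρ ≤ ‖ν + n‖}
  have hsub : transJ v₁ v₂ ⁻¹' A ∩ {ω | ω ∈ Metric.sphere 0 1 ∧
      ρ ≤ 2 * ‖v₁ - v₂‖⁻¹ * inner ℝ ω (v₂ - v₁)} ⊆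
      (fun ν => normalize (ν + n)) '' (A ∩ Metric.sphere 0 1 ∩ T) := by
    rintro ω ⟨hωA, hω, hρω⟩
    have hω1 : ‖ω‖ = 1 := mem_sphere_zero_iff_norm.mp hω
    have hcoef : 0 ≤ 2 * ‖v₁ - v₂‖⁻¹ * inner ℝ ω (v₂ - v₁) := hρ.le.trans hρω
    have hpos : 0 < inner ℝ ω (v₂ - v₁) := pos_of_mul_pos_right (hρ.trans_le hρω) (by positivity)
    refine ⟨transJ v₁ v₂ ω, ⟨⟨hωA, mem_sphere_zero_iff_norm.mpr (norm_transJ h hω1)⟩, ?_⟩,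
      normalize_transJ_add_smul h hω1 hpos⟩
    change ρ ≤ ‖transJ v₁ v₂ ω + n‖
    rwa [transJ_add_smul, norm_smul, hω1, mul_one, Real.norm_of_nonneg hcoef]
  calc _ ≤ μH[s] ((fun ν => normalize (ν + n)) '' (A ∩ Metric.sphere 0 1 ∩ T)) := measure_mono hsub
    _ ≤ ENNReal.ofReal (2 / ρ) ^ s * μH[s] (A ∩ Metric.sphere 0 1 ∩ T) :=
      ((lipschitzOnWith_normalize_add_const hρ n).mono inter_subset_right).hausdorffMeasure_image_le
        hs
    _ ≤ _ := mul_le_mul_right (measure_mono inter_subset_left) _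

theorem setLIntegral_comp_transJ_le (h : v₁ ≠ v₂) {s : ℝ} (hs : 0 ≤ s) {ρ : ℝ} (hρ : 0 < ρ)
    {g : EuclideanSpace ℝ (Fin d) → ℝ≥0∞} (hg : Measurable g) :
    ∫⁻ ω in {ω | ω ∈ Metric.sphere 0 1 ∧ ρ ≤ 2 * ‖v₁ - v₂‖⁻¹ * inner ℝ ω (v₂ - v₁)},
        g (transJ v₁ v₂ ω) ∂μH[s] ≤
      ENNReal.ofReal (2 / ρ) ^ s * ∫⁻ ν in Metric.sphere 0 1, g ν ∂μH[s] := by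
  have hmap : (μH[s].restrict {ω | ω ∈ Metric.sphere 0 1 ∧
      ρ ≤ 2 * ‖v₁ - v₂‖⁻¹ * inner ℝ ω (v₂ - v₁)}).map (transJ v₁ v₂) ≤
      ENNReal.ofReal (2 / ρ) ^ s • μH[s].restrict (Metric.sphere 0 1) := by
    refine Measure.le_iff.mpr fun A hA => ?_
    rw [Measure.map_apply continuous_transJ.measurable hA,
      Measure.restrict_apply (continuous_transJ.measurable hA), Measure.smul_apply,
      Measure.restrict_apply hA, smul_eq_mul]
    exact hausdorffMeasure_preimage_transJ_inter_le h hs hρ A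
  calc _ = ∫⁻ ν, g ν ∂(μH[s].restrict {ω | ω ∈ Metric.sphere 0 1 ∧
          ρ ≤ 2 * ‖v₁ - v₂‖⁻¹ * inner ℝ ω (v₂ - v₁)}).map (transJ v₁ v₂) :=
        (lintegral_map hg continuous_transJ.measurable).symm
    _ ≤ ∫⁻ ν, g ν ∂(ENNReal.ofReal (2 / ρ) ^ s • μH[s].restrict (Metric.sphere 0 1)) :=
        lintegral_mono' hmap le_rfl
    _ = _ := lintegral_smul_measure _ _

theorem setLIntegral_comp_transJ_mul_inner_pow_le (hd : 1 ≤ d) (h : v₁ ≠ v₂) {b : ℝ}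
    (hb : 0 < b) {g : EuclideanSpace ℝ (Fin d) → ℝ≥0∞} (hg : Measurable g) :
    ∫⁻ ω in {ω | ω ∈ Metric.sphere 0 1 ∧ inner ℝ ω (v₂ - v₁) ∈ Ioc (b / 2) b},
        g (transJ v₁ v₂ ω) * ENNReal.ofReal (inner ℝ ω (v₂ - v₁) ^ d) ∂μH[(d : ℝ) - 1] ≤
      ENNReal.ofReal ((2 * ‖v₂ - v₁‖) ^ (d - 1) * b) *
        ∫⁻ ν in Metric.sphere 0 1, g ν ∂μH[(d : ℝ) - 1] := by
  rw [norm_sub_rev v₂ v₁]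
  set r := ‖v₁ - v₂‖
  have hr : 0 < r := norm_pos_iff.mpr (sub_ne_zero.mpr h)
  have hs : (0 : ℝ) ≤ d - 1 := by
    rw [sub_nonneg]; exact_mod_cast hd
  have hshell : {ω | ω ∈ Metric.sphere 0 1 ∧ inner ℝ ω (v₂ - v₁) ∈ Ioc (b / 2) b} ⊆
      {ω | ω ∈ Metric.sphere 0 1 ∧ b / r ≤ 2 * r⁻¹ * inner ℝ ω (v₂ - v₁)} := by
    rintro ω ⟨hω, hlo, -⟩
    refine ⟨hω, ?_⟩
    rw [div_eq_inv_mul, mul_comm 2, mul_assoc]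
    gcongr
    linarith
  have hconst : ENNReal.ofReal (2 / (b / r)) ^ ((d : ℝ) - 1) * ENNReal.ofReal (b ^ d) =
      ENNReal.ofReal ((2 * r) ^ (d - 1) * b) := by
    obtain ⟨m, rfl⟩ : ∃ m, d = m + 1 := ⟨d - 1, by omega⟩
    rw [Nat.cast_succ, add_sub_cancel_right, ENNReal.rpow_natCast,
      ← ENNReal.ofReal_pow (by positivity), ← ENNReal.ofReal_mul (by positivity),
      Nat.add_sub_cancel, div_div_eq_mul_div, div_pow, mul_pow, pow_succ]
    congr 1
    field_simp
  calc _ ≤ ∫⁻ ω in {ω | ω ∈ Metric.sphere 0 1 ∧ inner ℝ ω (v₂ - v₁) ∈ Ioc (b / 2) b},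
        g (transJ v₁ v₂ ω) * ENNReal.ofReal (b ^ d) ∂μH[(d : ℝ) - 1] := by
        refine setLIntegral_mono ((hg.comp continuous_transJ.measurable).mul_const _) ?_
        rintro ω ⟨-, hlo, hhi⟩
        have hpos : 0 < inner ℝ ω (v₂ - v₁) := by linarith
        gcongr
    _ = (∫⁻ ω in {ω | ω ∈ Metric.sphere 0 1 ∧ inner ℝ ω (v₂ - v₁) ∈ Ioc (b / 2) b},
        g (transJ v₁ v₂ ω) ∂μH[(d : ℝ) - 1]) * ENNReal.ofReal (b ^ d) :=
        lintegral_mul_const' _ _ ENNReal.ofReal_ne_top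
    _ ≤ (ENNReal.ofReal (2 / (b / r)) ^ ((d : ℝ) - 1) *
        ∫⁻ ν in Metric.sphere 0 1, g ν ∂μH[(d : ℝ) - 1]) * ENNReal.ofReal (b ^ d) := by
        gcongr
        exact (lintegral_mono_set hshell).trans
          (setLIntegral_comp_transJ_le h hs (div_pos hb hr) hg)
    _ = _ := by rw [mul_right_comm, hconst]

end transJ

theorem stmt_19 (d : ℕ) (hd : 2 ≤ d) :
    ∃ C > 0, ∀ v₁ v₂ : EuclideanSpace ℝ (Fin d), v₁ ≠ v₂ →
      ∀ g : EuclideanSpace ℝ (Fin d) → ENNReal, Measurable g →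
        ∫⁻ ω in {ω : EuclideanSpace ℝ (Fin d) |
              ω ∈ Metric.sphere (0 : EuclideanSpace ℝ (Fin d)) 1 ∧
              0 < (inner ℝ ω (v₂ - v₁) : ℝ)},
            g (transJ v₁ v₂ ω) * ENNReal.ofReal ((inner ℝ ω (v₂ - v₁) : ℝ) ^ d)
            ∂(μH[(d : ℝ) - 1]) ≤
          ENNReal.ofReal (C * ‖v₁ - v₂‖ ^ d) *
            ∫⁻ ν in Metric.sphere (0 : EuclideanSpace ℝ (Fin d)) 1, g ν ∂(μH[(d : ℝ) - 1]) := by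
  refine ⟨2 ^ d, by positivity, fun v₁ v₂ h g hg => ?_⟩
  have ha : v₂ - v₁ ≠ 0 := sub_ne_zero.mpr h.symm
  set r := ‖v₂ - v₁‖
  have hsum : HasSum (fun k : ℕ => (2 * r) ^ (d - 1) * (2⁻¹ ^ k * r)) ((2 * r) ^ d) := by
    have h := (hasSum_geometric_two.mul_right r).mul_left ((2 * r) ^ (d - 1))
    simp only [one_div] at h
    rwa [pow_sub_one_mul (by omega : d ≠ 0)] at h
  rw [← iUnion_sphereShell ha,
    lintegral_iUnion (measurableSet_sphereShell _) (pairwise_disjoint_sphereShell _)]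
  calc _ ≤ ∑' k : ℕ, ENNReal.ofReal ((2 * r) ^ (d - 1) * (2⁻¹ ^ k * r)) *
        ∫⁻ ν in Metric.sphere 0 1, g ν ∂μH[(d : ℝ) - 1] :=
        ENNReal.tsum_le_tsum fun k =>
          setLIntegral_comp_transJ_mul_inner_pow_le (by omega) h (by positivity) hg
    _ = _ := by
      rw [ENNReal.tsum_mul_right, ← ENNReal.ofReal_tsum_of_nonneg (fun k => by positivity)
        hsum.summable, hsum.tsum_eq, mul_pow, norm_sub_rev v₁ v₂]
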